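/- arXiv:1605.07728 — 4 statements merged into one kernel-verified Lean document; each statement's English description precedes it below -/
import Mathlib

section
/- Let G be a directed graph on n vertices without loops, and let n₁ be the number of vertices with at least one outgoing edge. Then G is (n₁+1, 0)-representable. -/
/-- Inner product of two bit vectors. -/
def bvInner {k : ℕ} (d p : Fin k → Bool) : ℕ := ∑ q, (if d q ∧ p q then 1 else 0)

/-- `(k,t)`-representability of a directed graph (given by its adjacency relation). -/
def Representable {V : Type*} [Fintype V] (Adj : V → V → Prop) (k t : ℕ) : Prop :=
  ∃ d p : V → Fin k → Bool, ∀ i j : V, i ≠ j → (Adj i j ↔ bvInner (d i) (p j) ≤ t)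

/-!
Give each vertex with an outgoing edge its own coordinate and let all other vertices share one
extra coordinate; `d i` is the indicator of the coordinate of `i`. Then `⟨d i, p j⟩` is the bit
of `p j` at that coordinate, so `p j` sets the own coordinate of `i` exactly when `i → j` is not
an edge, and sets the shared coordinate always.
-/

lemma bvInner_indicator {k : ℕ} (a : Fin k) (p : Fin k → Bool) :
    bvInner (fun q => decide (q = a)) p = if p a then 1 else 0 := by
  simp [bvInner, ite_and]

lemma representable_zero_of_adj_iff {V : Type*} [Fintype V] (Adj : V → V → Prop) {k : ℕ}
    (c : V → Fin k) (R : Fin k → V → Prop) (h : ∀ i j, i ≠ j → (Adj i j ↔ R (c i) j)) :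
    Representable Adj k 0 := by
  classical
  refine ⟨fun i q => decide (q = c i), fun j q => decide ¬ R q j, fun i j hij => ?_⟩
  rw [h i j hij, bvInner_indicator]
  by_cases hR : R (c i) j <;> simp [hR]

lemma exists_injOn_fin_ncard_succ {V : Type*} [Finite V] (S : Set V) :
    ∃ c : V → Fin (S.ncard + 1), S.InjOn c ∧ ∀ i, c i = Fin.last _ ↔ i ∉ S := by
  classical
  let e : S ≃ Fin S.ncard := (Finite.equivFin S).trans (finCongr (Nat.card_coe_set_eq S))
  refine ⟨fun i => if h : i ∈ S then (e ⟨i, h⟩).castSucc else Fin.last _, ?_, fun i => ?_⟩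
  · intro i hi i' hi' hc
    simpa [hi, hi'] using hc
  · by_cases hi : i ∈ S <;> simp [hi, Fin.castSucc_ne_last]

theorem representable_outdeg_general (n : ℕ) (Adj : Fin n → Fin n → Prop) :
    Representable Adj ({i : Fin n | ∃ j, i ≠ j ∧ Adj i j}.ncard + 1) 0 := by
  set S : Set (Fin n) := {i | ∃ j, i ≠ j ∧ Adj i j}
  obtain ⟨c, hinj, hlast⟩ := exists_injOn_fin_ncard_succ S
  refine representable_zero_of_adj_iff Adj c (fun q j => ∃ i ∈ S, c i = q ∧ Adj i j) ?_
  intro i j hij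
  constructor
  · intro hA
    exact ⟨i, ⟨j, hij, hA⟩, rfl, hA⟩
  · rintro ⟨i', hi', hc, hA⟩
    have hi : i ∈ S := by
      by_contra hi
      exact (hlast i').mp (hc.trans ((hlast i).mpr hi)) hi'
    rwa [← hinj hi' hi hc]

/-- If `n₁` vertices have an outgoing edge, the graph is `(n₁+1, 0)`-representable. -/
theorem representable_outdeg (n : ℕ) (Adj : Fin n → Fin n → Prop)
    (hloop : ∀ i, ¬ Adj i i) :
    Representable Adj ({i : Fin n | ∃ j, i ≠ j ∧ Adj i j}.ncard + 1) 0 :=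
  representable_outdeg_general n Adj
end

section
/- Let G be a directed graph on n vertices without loops, and let n₂ be the number of vertices with at least one incoming edge. Then G is (n₂+1, 0)-representable. -/
/-!
Give every vertex `j` with an incoming edge its own coordinate, and all remaining vertices one
shared extra coordinate. Let `p_j` be the unit vector at the coordinate of `j`, and let `d_i`
vanish exactly at the coordinates of the out-neighbours of `i`. Then `⟨d_i, p_j⟩ = 0` iff
`i → j`; for a vertex `j` without incoming edges this holds because the shared coordinate is
never the coordinate of an out-neighbour.
-/

theorem bvInner_unitVector_le_zero_iff {k : ℕ} (d : Fin k → Bool) (a : Fin k) :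
    bvInner d (fun q => decide (q = a)) ≤ 0 ↔ d a = false := by
  simp only [bvInner, Nat.le_zero, Finset.sum_eq_zero_iff, Finset.mem_univ, true_implies,
    ite_eq_right_iff, one_ne_zero, imp_false, not_and, decide_eq_true_eq]
  exact ⟨fun h => Bool.eq_false_iff.mpr (h a · rfl), fun ha q hq hqa => by simp_all⟩

theorem representable_zero_of_key {V ι : Type*} [Fintype V] [Fintype ι] (Adj : V → V → Prop)
    (key : V → ι) (hkey : ∀ i j j', i ≠ j → i ≠ j' → key j = key j' → Adj i j → Adj i j') :
    Representable Adj (Fintype.card ι) 0 := by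
  classical
  let e := Fintype.equivFin ι
  refine ⟨fun i q => decide (∀ j, i ≠ j → e (key j) = q → ¬ Adj i j),
    fun j q => decide (q = e (key j)), fun i j hij => ?_⟩
  rw [bvInner_unitVector_le_zero_iff, decide_eq_false_iff_not]
  push Not
  constructor
  · exact fun hadj => ⟨j, hij, rfl, hadj⟩
  · rintro ⟨j', hij', hkey', hadj'⟩
    exact hkey i j' j hij' hij (e.injective hkey') hadj'

theorem representable_indeg_general (n : ℕ) (Adj : Fin n → Fin n → Prop) :
    Representable Adj ({j : Fin n | ∃ i, i ≠ j ∧ Adj i j}.ncard + 1) 0 := by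
  classical
  set S := {j : Fin n | ∃ i, i ≠ j ∧ Adj i j}
  have hcard : Fintype.card (Option S) = S.ncard + 1 := by
    rw [Fintype.card_option, ← Nat.card_eq_fintype_card, Nat.card_coe_set_eq]
  rw [← hcard]
  refine representable_zero_of_key Adj (fun j => if h : j ∈ S then some ⟨j, h⟩ else none) ?_
  intro i j j' hij _ hkey hadj
  have hjS : j ∈ S := ⟨i, hij, hadj⟩
  by_cases hj'S : j' ∈ S
  · simp_all
  · simp [hjS, hj'S] at hkey

/-- If `n₂` vertices have an incoming edge, the graph is `(n₂+1, 0)`-representable. -/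
theorem representable_indeg (n : ℕ) (Adj : Fin n → Fin n → Prop)
    (hloop : ∀ i, ¬ Adj i i) :
    Representable Adj ({j : Fin n | ∃ i, i ≠ j ∧ Adj i j}.ncard + 1) 0 :=
  representable_indeg_general n Adj
end

section
/- For every n ≥ 3, the directed graph on vertices Z/nZ with edge set E = {(i,j) : j ≠ i and j ≠ i - 1} (the complement of a directed Hamiltonian cycle, without loops) is not (k,0)-representable for any k < n. -/
/-!
In a `(k,0)`-representation, every non-edge `(i, i - 1)` is witnessed by a coordinate `q` with
`d i q = p (i - 1) q = true`. Two distinct vertices cannot share a witness, because for any two of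
these non-edges one of the two "crossed" pairs is an edge, whose inner product must vanish.
Hence the `n` witnesses are distinct coordinates among `k`.
-/

lemma bvInner_eq_zero_iff {k : ℕ} (d p : Fin k → Bool) :
    bvInner d p = 0 ↔ ∀ q, ¬ (d q ∧ p q) := by
  simp [bvInner]

/-- A fooling set, in the sense of communication complexity, of non-edges of `Adj`. -/
structure IsFoolingFamily {V ι : Type*} (Adj : V → V → Prop) (a b : ι → V) : Prop where
  ne : ∀ s, a s ≠ b s
  not_adj : ∀ s, ¬ Adj (a s) (b s)
  cross : ∀ s t, s ≠ t →
    (a s ≠ b t ∧ Adj (a s) (b t)) ∨ (a t ≠ b s ∧ Adj (a t) (b s))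

theorem IsFoolingFamily.card_le {V ι : Type*} [Fintype V] [Fintype ι] {Adj : V → V → Prop}
    {a b : ι → V} (hF : IsFoolingFamily Adj a b) {k : ℕ} (hR : Representable Adj k 0) :
    Fintype.card ι ≤ k := by
  obtain ⟨d, p, hdp⟩ := hR
  have no_common {i j : V} (hij : i ≠ j) (hadj : Adj i j) (q : Fin k) : ¬ (d i q ∧ p j q) :=
    (bvInner_eq_zero_iff _ _).1 (Nat.le_zero.1 ((hdp i j hij).1 hadj)) q
  have witness (s : ι) : ∃ q, d (a s) q ∧ p (b s) q := by
    simpa [bvInner_eq_zero_iff] using mt (hdp _ _ (hF.ne s)).2 (hF.not_adj s)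
  choose f hf using witness
  have f_inj : Function.Injective f := by
    intro s t hst
    by_contra hne
    rcases hF.cross s t hne with ⟨hne', hadj⟩ | ⟨hne', hadj⟩
    · exact no_common hne' hadj (f s) ⟨(hf s).1, hst ▸ (hf t).2⟩
    · exact no_common hne' hadj (f s) ⟨hst ▸ (hf t).1, (hf s).2⟩
  simpa using Fintype.card_le_of_injective f f_inj

lemma isFoolingFamily_complement_cycle (n : ℕ) (hn : 3 ≤ n) :
    IsFoolingFamily (fun i j : ZMod n => j ≠ i ∧ j ≠ i - 1) id (· - 1) := by
  have : Fact (1 < n) := ⟨by omega⟩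
  have htwo : (2 : ZMod n) ≠ 0 := by
    rw [← Nat.cast_ofNat, Ne, ZMod.natCast_eq_zero_iff]
    exact fun h => absurd (Nat.le_of_dvd two_pos h) (by omega)
  refine ⟨fun i => ?_, fun i => by simp, fun s t hst => ?_⟩
  · exact fun h => sub_eq_self.not.2 one_ne_zero h.symm
  by_cases hts : t = s - 1
  · -- the crossed edge is `(s, s - 2)`, a non-loop only because `n ≥ 3`
    left
    subst hts
    grind
  · right
    grind

/-- For `n ≥ 3`, the complement of a directed Hamiltonian cycle on `ZMod n` is not
`(k,0)`-representable for any `k < n`. -/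
theorem not_representable_complement_cycle (n : ℕ) [NeZero n] (hn : 3 ≤ n)
    (k : ℕ) (hk : k < n) :
    ¬ Representable (fun i j : ZMod n => j ≠ i ∧ j ≠ i - 1) k 0 := by
  intro hR
  have := (isFoolingFamily_complement_cycle n hn).card_le hR
  rw [ZMod.card] at this
  omega
end

section
/- Let G be the complement of a directed Hamiltonian cycle on N = C(k,2) vertices (vertex set Z/NZ, edges (i,j) for all j ∉ {i, i-1}). In any (k,1)-representation of G, for every vertex u there exist two distinct conflict bits q₁, q₂ that both lie in Q_d(u) ∩ Q_p(u-1), and moreover the pairs {q₁^u, q₂^u} are distinct across distinct vertices u. -/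
/-!
In a `(k,1)`-representation the pairs that are *not* edges are exactly those with at least two
common conflict bits. In the complement of a Hamiltonian cycle the only non-edge out of `u` is
`(u, u - 1)`, which yields the pair of bits at `u`. If the pairs at `u ≠ v` coincided, that pair
would also make `(u, v - 1)` and `(v, u - 1)` non-edges, forcing `u = v - 1` and `v = u - 1`,
i.e. a cycle of length two, impossible when `N ≥ 3`.
-/

open Finset

section BitVector

variable {k : ℕ}

theorem bvInner_eq_card (d p : Fin k → Bool) :
    bvInner d p = #{q | d q ∧ p q} := by
  rw [bvInner, card_filter]

theorem exists_pair_of_one_lt_bvInner {d p : Fin k → Bool} (h : 1 < bvInner d p) :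
    ∃ x y, x ≠ y ∧ d x = true ∧ d y = true ∧ p x = true ∧ p y = true := by
  rw [bvInner_eq_card] at h
  obtain ⟨x, hx, y, hy, hxy⟩ := one_lt_card.mp h
  simp only [mem_filter, mem_univ, true_and] at hx hy
  exact ⟨x, y, hxy, hx.1, hy.1, hx.2, hy.2⟩

theorem one_lt_bvInner_of_subset {d p : Fin k → Bool} {s : Finset (Fin k)} (hs : 1 < #s)
    (h : ∀ q ∈ s, d q = true ∧ p q = true) : 1 < bvInner d p := by
  rw [bvInner_eq_card]
  exact hs.trans_le (card_le_card fun q hq => by simpa using h q hq)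

end BitVector

section CycleComplement

variable {V : Type*} {k : ℕ} {d p : V → Fin k → Bool} {pred : V → V}

theorem one_lt_bvInner_pred
    (hrep : ∀ i j, i ≠ j → (j ≠ pred i ↔ bvInner (d i) (p j) ≤ 1)) {u : V} (hu : pred u ≠ u) :
    1 < bvInner (d u) (p (pred u)) :=
  not_le.mp fun h => (hrep u _ hu.symm).mpr h rfl

theorem eq_pred_of_one_lt_bvInner
    (hrep : ∀ i j, i ≠ j → (j ≠ pred i ↔ bvInner (d i) (p j) ≤ 1)) {i j : V} (hij : i ≠ j)
    (h : 1 < bvInner (d i) (p j)) : j = pred i :=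
  not_not.mp fun hj => (hrep i j hij).mp hj |>.not_gt h

theorem eq_pred_of_common_conflict_bits
    (hrep : ∀ i j, i ≠ j → (j ≠ pred i ↔ bvInner (d i) (p j) ≤ 1))
    (hinj : Function.Injective pred) {u v : V} (huv : u ≠ v) {s : Finset (Fin k)} (hs : 1 < #s)
    (hd : ∀ q ∈ s, d u q = true) (hp : ∀ q ∈ s, p (pred v) q = true) : u = pred v := by
  by_contra h
  have hinner : 1 < bvInner (d u) (p (pred v)) :=
    one_lt_bvInner_of_subset hs fun q hq => ⟨hd q hq, hp q hq⟩
  exact huv (hinj (eq_pred_of_one_lt_bvInner hrep h hinner)).symm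

theorem exists_distinct_conflict_pairs
    (hrep : ∀ i j, i ≠ j → (j ≠ pred i ↔ bvInner (d i) (p j) ≤ 1))
    (hinj : Function.Injective pred) (hfix : ∀ u, pred u ≠ u) (htwo : ∀ u, pred (pred u) ≠ u) :
    ∃ q : V → Fin k × Fin k,
      (∀ u, (q u).1 ≠ (q u).2 ∧
        d u (q u).1 = true ∧ d u (q u).2 = true ∧
        p (pred u) (q u).1 = true ∧ p (pred u) (q u).2 = true) ∧
      ∀ u v, u ≠ v →
        ({(q u).1, (q u).2} : Finset (Fin k)) ≠ {(q v).1, (q v).2} := by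
  choose x y hxy hdx hdy hpx hpy using
    fun u => exists_pair_of_one_lt_bvInner (one_lt_bvInner_pred hrep (hfix u))
  refine ⟨fun u => (x u, y u), fun u => ⟨hxy u, hdx u, hdy u, hpx u, hpy u⟩, ?_⟩
  intro u v huv hpair
  simp only at hpair
  have hd : ∀ w, ∀ q ∈ ({x w, y w} : Finset (Fin k)), d w q = true := by
    simp [hdx, hdy]
  have hp : ∀ w, ∀ q ∈ ({x w, y w} : Finset (Fin k)), p (pred w) q = true := by
    simp [hpx, hpy]
  have hcard : 1 < #({x u, y u} : Finset (Fin k)) := by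
    rw [card_pair (hxy u)]; exact one_lt_two
  have hu : u = pred v :=
    eq_pred_of_common_conflict_bits hrep hinj huv hcard (hd u) (hpair ▸ hp v)
  have hv : v = pred u :=
    eq_pred_of_common_conflict_bits hrep hinj huv.symm hcard (hpair ▸ hd v) (hp u)
  exact htwo u (hv ▸ hu).symm

end CycleComplement

theorem ZMod.natCast_ne_zero_of_pos_of_lt {m n : ℕ} (hm : 0 < m) (hmn : m < n) :
    (m : ZMod n) ≠ 0 := by
  rw [Ne, ZMod.natCast_eq_zero_iff]
  exact fun h => (Nat.le_of_dvd hm h).not_gt hmn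

theorem gadget_conflict_pairs_general (k : ℕ)
    (hN : 3 ≤ Nat.choose k 2)
    (d p : ZMod (Nat.choose k 2) → Fin k → Bool)
    (hrep : ∀ i j : ZMod (Nat.choose k 2), i ≠ j →
      ((j ≠ i - 1) ↔ bvInner (d i) (p j) ≤ 1)) :
    ∃ q : ZMod (Nat.choose k 2) → Fin k × Fin k,
      (∀ u, (q u).1 ≠ (q u).2 ∧
        d u (q u).1 = true ∧ d u (q u).2 = true ∧
        p (u - 1) (q u).1 = true ∧ p (u - 1) (q u).2 = true) ∧
      ∀ u v, u ≠ v →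
        ({(q u).1, (q u).2} : Finset (Fin k)) ≠ {(q v).1, (q v).2} := by
  have hone : (1 : ZMod (Nat.choose k 2)) ≠ 0 := by
    exact_mod_cast ZMod.natCast_ne_zero_of_pos_of_lt one_pos (by omega)
  have htwo : (2 : ZMod (Nat.choose k 2)) ≠ 0 := by
    exact_mod_cast ZMod.natCast_ne_zero_of_pos_of_lt two_pos (by omega)
  refine exists_distinct_conflict_pairs (pred := (· - 1)) hrep sub_left_injective
    (fun u => sub_eq_self.not.mpr hone) (fun u => ?_)
  rw [sub_sub, one_add_one_eq_two]
  exact sub_eq_self.not.mpr htwo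

/-- In any `(k,1)`-representation of the complement of a directed Hamiltonian cycle on
`N = C(k,2)` vertices, every vertex `u` has two distinct conflict bits lying in
`Q_d(u) ∩ Q_p(u-1)`, and these pairs are distinct across distinct vertices. -/
theorem gadget_conflict_pairs (k : ℕ) [NeZero (Nat.choose k 2)]
    (hN : 3 ≤ Nat.choose k 2)
    (d p : ZMod (Nat.choose k 2) → Fin k → Bool)
    (hrep : ∀ i j : ZMod (Nat.choose k 2), i ≠ j →
      ((j ≠ i - 1) ↔ bvInner (d i) (p j) ≤ 1)) :
    ∃ q : ZMod (Nat.choose k 2) → Fin k × Fin k,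
      (∀ u, (q u).1 ≠ (q u).2 ∧
        d u (q u).1 = true ∧ d u (q u).2 = true ∧
        p (u - 1) (q u).1 = true ∧ p (u - 1) (q u).2 = true) ∧
      ∀ u v, u ≠ v →
        ({(q u).1, (q u).2} : Finset (Fin k)) ≠ {(q v).1, (q v).2} :=
  gadget_conflict_pairs_general k hN d p hrep
end
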